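/- Let 1 ≤ p < ∞ and let v₀ : ℝ^{M×N} → ℝ be continuous and bounded, and set v(s) := v₀(s)(1+|s|^p). If there exists a continuous function α : [0,∞) → [0,∞) with α(0)=0 such that |v₀(s)-v₀(t)| ≤ α(|s-t|/(1+|s|+|t|)) for all s,t, then there exists a continuous function β : [0,∞) → [0,∞) with β(0)=0 such that |v(s)-v(t)| ≤ β(|s-t|/(1+|s|+|t|))·(1+|s|^p+|t|^p) for all s,t ∈ ℝ^{M×N}. -/

import Mathlib

open MeasureTheory Metric Filter
open scoped ENNReal Topology

noncomputable section

abbrev EN (N : ℕ) : Type := EuclideanSpace ℝ (Fin N)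
abbrev Mat (M N : ℕ) : Type := Matrix (Fin M) (Fin N) ℝ

/-- Frobenius norm on real `M × N` matrices. -/
def fnorm {M N : ℕ} (s : Mat M N) : ℝ := Real.sqrt (∑ i, ∑ j, (s i j) ^ 2)

/-- The matrix of partial derivatives (gradient) of `φ : ℝ^N → ℝ^M` at `x`,
computed via the Fréchet derivative (junk value `0` where `φ` is not differentiable). -/
def grad {M N : ℕ} (φ : EN N → EN M) (x : EN N) : Mat M N :=
  Matrix.of fun i j => fderiv ℝ φ x (EuclideanSpace.single j 1) i

/-!
Write `v s - v t = (v₀ s - v₀ t)(1 + |s|^p) + v₀ t (|s|^p - |t|^p)`. The first term is controlled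
by `α`, the second by the bound `C` on `v₀` and the elementary estimate
`||s|^p - |t|^p| ≤ 3p · |s - t| / (1 + |s| + |t|) · (1 + |s|^p + |t|^p)`, so
`β x = α x + 3pC x` works. For `b ≤ a` the elementary estimate follows from the tangent-line
bound `a^p - b^p ≤ p a^(p-1) (a - b)` (Bernoulli) and `a^(p-1) (1 + a + b) ≤ 3 (1 + a^p + b^p)`,
applied to `a, b = |s|, |t|` with `||s| - |t|| ≤ |s - t|`.
-/

namespace Real

lemma rpow_sub_rpow_le_mul_rpow_sub_one {p : ℝ} (hp : 1 ≤ p) {a b : ℝ} (ha : 0 < a)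
    (hb : 0 ≤ b) : a ^ p - b ^ p ≤ p * a ^ (p - 1) * (a - b) := by
  have hbernoulli := one_add_mul_self_le_rpow_one_add (s := (b - a) / a)
    (by rw [le_div_iff₀ ha]; linarith) hp
  have hratio : 1 + (b - a) / a = b / a := by field_simp; ring
  rw [hratio, div_rpow hb ha.le, le_div_iff₀ (rpow_pos_of_pos ha p)] at hbernoulli
  have hpow : a ^ p = a ^ (p - 1) * a := by
    rw [← rpow_add_one ha.ne']; ring_nf
  have hexpand : (1 + p * ((b - a) / a)) * a ^ p = a ^ p - p * a ^ (p - 1) * (a - b) := by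
    rw [hpow]; field_simp; ring
  linarith

lemma rpow_sub_one_le_one_add_rpow {p : ℝ} (hp : 1 ≤ p) {a : ℝ} (ha : 0 ≤ a) :
    a ^ (p - 1) ≤ 1 + a ^ p := by
  rcases le_total a 1 with h | h
  · linarith [rpow_le_one ha h (sub_nonneg.2 hp), rpow_nonneg ha p]
  · linarith [rpow_le_rpow_of_exponent_le h (sub_le_self p zero_le_one)]

lemma rpow_sub_rpow_le_of_le {p : ℝ} (hp : 1 ≤ p) {a b : ℝ} (hb : 0 ≤ b) (hba : b ≤ a) :
    a ^ p - b ^ p ≤ 3 * p * ((a - b) / (1 + a + b)) * (1 + a ^ p + b ^ p) := by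
  obtain rfl | ha := (hb.trans hba).eq_or_lt
  · simp [le_antisymm hba hb]
  have hweight : a ^ (p - 1) * (1 + a + b) ≤ 3 * (1 + a ^ p + b ^ p) := by
    have hpow : a ^ (p - 1) * a = a ^ p := by rw [← rpow_add_one ha.ne']; ring_nf
    have := mul_le_mul_of_nonneg_left hba (rpow_nonneg ha.le (p - 1))
    linarith [rpow_sub_one_le_one_add_rpow hp ha.le, rpow_nonneg hb p]
  calc a ^ p - b ^ p ≤ p * a ^ (p - 1) * (a - b) := rpow_sub_rpow_le_mul_rpow_sub_one hp ha hb
    _ = p * ((a - b) / (1 + a + b)) * (a ^ (p - 1) * (1 + a + b)) := by field_simp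
    _ ≤ p * ((a - b) / (1 + a + b)) * (3 * (1 + a ^ p + b ^ p)) := by gcongr
    _ = _ := by ring

lemma abs_rpow_sub_rpow_le {p : ℝ} (hp : 1 ≤ p) {a b : ℝ} (ha : 0 ≤ a) (hb : 0 ≤ b) :
    |a ^ p - b ^ p| ≤ 3 * p * (|a - b| / (1 + a + b)) * (1 + a ^ p + b ^ p) := by
  rcases le_total b a with h | h
  · rw [abs_of_nonneg (sub_nonneg.2 (rpow_le_rpow hb h (by linarith))),
      abs_of_nonneg (sub_nonneg.2 h)]
    exact rpow_sub_rpow_le_of_le hp hb h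
  · rw [abs_of_nonpos (sub_nonpos.2 (rpow_le_rpow ha h (by linarith))),
      abs_of_nonpos (sub_nonpos.2 h)]
    convert rpow_sub_rpow_le_of_le hp ha h using 2 <;> ring

end Real

section SeminormedAddCommGroup

variable {E : Type*} [SeminormedAddCommGroup E] {p : ℝ}

lemma abs_norm_rpow_sub_norm_rpow_le (hp : 1 ≤ p) (s t : E) :
    |‖s‖ ^ p - ‖t‖ ^ p| ≤
      3 * p * (‖s - t‖ / (1 + ‖s‖ + ‖t‖)) * (1 + ‖s‖ ^ p + ‖t‖ ^ p) := by
  refine (Real.abs_rpow_sub_rpow_le hp (norm_nonneg s) (norm_nonneg t)).trans ?_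
  gcongr
  exact abs_norm_sub_norm_le s t

lemma abs_mul_one_add_norm_rpow_sub_le (hp : 1 ≤ p) {v₀ : E → ℝ} {C : ℝ}
    (hC : ∀ s, |v₀ s| ≤ C) {α : ℝ → ℝ} (hαnn : ∀ x, 0 ≤ x → 0 ≤ α x)
    (hα : ∀ s t, |v₀ s - v₀ t| ≤ α (‖s - t‖ / (1 + ‖s‖ + ‖t‖))) (s t : E) :
    |v₀ s * (1 + ‖s‖ ^ p) - v₀ t * (1 + ‖t‖ ^ p)| ≤
      (α (‖s - t‖ / (1 + ‖s‖ + ‖t‖)) + 3 * p * C * (‖s - t‖ / (1 + ‖s‖ + ‖t‖))) *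
        (1 + ‖s‖ ^ p + ‖t‖ ^ p) := by
  set r := ‖s - t‖ / (1 + ‖s‖ + ‖t‖)
  have hr : 0 ≤ r := by positivity
  calc |v₀ s * (1 + ‖s‖ ^ p) - v₀ t * (1 + ‖t‖ ^ p)|
      = |(v₀ s - v₀ t) * (1 + ‖s‖ ^ p) + v₀ t * (‖s‖ ^ p - ‖t‖ ^ p)| := by ring_nf
    _ ≤ |v₀ s - v₀ t| * (1 + ‖s‖ ^ p) + |v₀ t| * |‖s‖ ^ p - ‖t‖ ^ p| := by
      refine (abs_add_le _ _).trans_eq ?_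
      rw [abs_mul, abs_mul, abs_of_nonneg (by positivity : 0 ≤ 1 + ‖s‖ ^ p)]
    _ ≤ α r * (1 + ‖s‖ ^ p + ‖t‖ ^ p) + C * (3 * p * r * (1 + ‖s‖ ^ p + ‖t‖ ^ p)) := by
      have hC0 : 0 ≤ C := (abs_nonneg _).trans (hC t)
      gcongr ?_ + ?_
      · have hweight : 1 + ‖s‖ ^ p ≤ 1 + ‖s‖ ^ p + ‖t‖ ^ p :=
          le_add_of_nonneg_right (by positivity)
        exact mul_le_mul (hα s t) hweight (by positivity) (hαnn r hr)
      · exact mul_le_mul (hC t) (abs_norm_rpow_sub_norm_rpow_le hp s t) (abs_nonneg _) hC0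
    _ = (α r + 3 * p * C * r) * (1 + ‖s‖ ^ p + ‖t‖ ^ p) := by ring

end SeminormedAddCommGroup

attribute [local instance] Matrix.frobeniusSeminormedAddCommGroup

lemma fnorm_eq_norm {M N : ℕ} (s : Mat M N) : fnorm s = ‖s‖ := by
  simp [fnorm, Matrix.frobenius_norm_def, Real.sqrt_eq_rpow, Real.norm_eq_abs]

theorem stmt0_general {M N : ℕ} (p : ℝ) (hp : 1 ≤ p)
    (v₀ : Mat M N → ℝ) (hv₀b : ∃ C : ℝ, ∀ s, |v₀ s| ≤ C)
    (v : Mat M N → ℝ) (hv : ∀ s, v s = v₀ s * (1 + fnorm s ^ p))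
    (α : ℝ → ℝ) (hαc : Continuous α) (hα0 : α 0 = 0) (hαnn : ∀ x, 0 ≤ x → 0 ≤ α x)
    (hα : ∀ s t : Mat M N,
      |v₀ s - v₀ t| ≤ α (fnorm (s - t) / (1 + fnorm s + fnorm t))) :
    ∃ β : ℝ → ℝ, Continuous β ∧ β 0 = 0 ∧ (∀ x, 0 ≤ x → 0 ≤ β x) ∧
      ∀ s t : Mat M N,
        |v s - v t| ≤ β (fnorm (s - t) / (1 + fnorm s + fnorm t))
          * (1 + fnorm s ^ p + fnorm t ^ p) := by
  obtain ⟨C, hC⟩ := hv₀b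
  have hC0 : 0 ≤ C := (abs_nonneg _).trans (hC 0)
  refine ⟨fun x => α x + 3 * p * C * x, by fun_prop, by simp [hα0],
    fun x hx => add_nonneg (hαnn x hx) (by positivity), fun s t => ?_⟩
  simp only [hv, fnorm_eq_norm] at hα ⊢
  exact abs_mul_one_add_norm_rpow_sub_le hp hC hαnn hα s t

/-- if `v₀` is continuous, bounded and relatively uniformly continuous
(with modulus `α`), then `v(s) = v₀(s)(1+|s|^p)` satisfies the corresponding
modulus estimate with weight `1+|s|^p+|t|^p`. -/
theorem stmt0 {M N : ℕ} (p : ℝ) (hp : 1 ≤ p)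
    (v₀ : Mat M N → ℝ) (hv₀c : Continuous v₀) (hv₀b : ∃ C : ℝ, ∀ s, |v₀ s| ≤ C)
    (v : Mat M N → ℝ) (hv : ∀ s, v s = v₀ s * (1 + fnorm s ^ p))
    (α : ℝ → ℝ) (hαc : Continuous α) (hα0 : α 0 = 0) (hαnn : ∀ x, 0 ≤ x → 0 ≤ α x)
    (hα : ∀ s t : Mat M N,
      |v₀ s - v₀ t| ≤ α (fnorm (s - t) / (1 + fnorm s + fnorm t))) :
    ∃ β : ℝ → ℝ, Continuous β ∧ β 0 = 0 ∧ (∀ x, 0 ≤ x → 0 ≤ β x) ∧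
      ∀ s t : Mat M N,
        |v s - v t| ≤ β (fnorm (s - t) / (1 + fnorm s + fnorm t))
          * (1 + fnorm s ^ p + fnorm t ^ p) :=
  stmt0_general p hp v₀ hv₀b v hv α hαc hα0 hαnn hα
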